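/- For every prime p and every integer r ≥ 0, the sum ∑_{k=r}^∞ P(p, k) converges and satisfies ∑_{k=r}^∞ P(p, k) ≤ 8·p^{−r²}. -/

import Mathlib

/-- The Cohen–Lenstra probability that a random abelian `p`-group has rank `r`:
`P(p, r) = p^(-r²) · (∏_{i=1}^∞ (1 - p^{-i})) / (∏_{i=1}^r (1 - p^{-i}))²`. -/
noncomputable def CLrank (p r : ℕ) : ℝ :=
  (∏' i : ℕ, (1 - 1 / (p : ℝ) ^ (i + 1))) /
    ((p : ℝ) ^ (r ^ 2) * (∏ i ∈ Finset.range r, (1 - 1 / (p : ℝ) ^ (i + 1))) ^ 2)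

/-!
Put `x = 1/p ≤ 1/2`. Splitting off the first factor and applying `1 - ∑ aᵢ ≤ ∏ (1 - aᵢ)` to the
rest shows that every partial product `∏_{i<m} (1 - x^{i+1})` is at least `1 - x - x² ≥ 1/4`,
while the infinite product is at most each partial one. Hence `P(p, m) ≤ 4 x^{m²}`, and since
`(r + k)² ≥ r² + k` the tail is dominated by the geometric series `4 x^{r²} ∑ x^k ≤ 8 x^{r²}`.
-/

open Finset

theorem Finset.one_sub_sum_le_prod_one_sub {ι R : Type*} [CommRing R] [LinearOrder R]
    [IsStrictOrderedRing R] (s : Finset ι) {a : ι → R}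
    (h0 : ∀ i ∈ s, 0 ≤ a i) (h1 : ∀ i ∈ s, a i ≤ 1) :
    1 - ∑ i ∈ s, a i ≤ ∏ i ∈ s, (1 - a i) := by
  induction s using Finset.cons_induction with
  | empty => simp
  | cons j s _ ih =>
    simp only [mem_cons, forall_eq_or_imp] at h0 h1
    have hprod_le : ∏ i ∈ s, (1 - a i) ≤ 1 :=
      prod_le_one (fun i hi => sub_nonneg.2 (h1.2 i hi)) fun i hi => by linarith [h0.2 i hi]
    rw [prod_cons, sum_cons]
    nlinarith [ih h0.2 h1.2]

section EulerFunction

variable {x : ℝ}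

theorem multipliable_one_sub_pow_succ (hx0 : 0 ≤ x) (hx1 : x < 1) :
    Multipliable fun i : ℕ => 1 - x ^ (i + 1) := by
  simpa only [sub_eq_add_neg, pow_succ'] using Real.multipliable_one_add_of_summable
    ((summable_geometric_of_lt_one hx0 hx1).mul_left x).neg

theorem tprod_one_sub_pow_succ_le_prod (hx0 : 0 ≤ x) (hx1 : x < 1) (s : Finset ℕ) :
    ∏' i : ℕ, (1 - x ^ (i + 1)) ≤ ∏ i ∈ s, (1 - x ^ (i + 1)) :=
  (prod_anti_set_of_le_one (fun _ => sub_nonneg.2 (pow_le_one₀ hx0 hx1.le))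
      (fun _ => sub_le_self _ (pow_nonneg hx0 _))).le_of_tendsto
    (multipliable_one_sub_pow_succ hx0 hx1).hasProd s

theorem one_sub_sub_sq_le_prod_one_sub_pow_succ (hx0 : 0 ≤ x) (hx1 : x < 1) (k : ℕ) :
    1 - x - x ^ 2 ≤ ∏ i ∈ range k, (1 - x ^ (i + 1)) := by
  cases k with
  | zero => rw [prod_range_zero]; nlinarith
  | succ n =>
    have hsum : ∑ i ∈ range n, x ^ (i + 2) ≤ x ^ 2 / (1 - x) := by
      calc ∑ i ∈ range n, x ^ (i + 2) = x ^ 2 * ∑ i ∈ Ico 0 n, x ^ i := by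
            rw [← range_eq_Ico, mul_sum]; simp only [pow_add, mul_comm]
        _ ≤ x ^ 2 * (x ^ 0 / (1 - x)) := by gcongr; exact geom_sum_Ico_le_of_lt_one hx0 hx1
        _ = x ^ 2 / (1 - x) := by ring
    have htail : 1 - x ^ 2 / (1 - x) ≤ ∏ i ∈ range n, (1 - x ^ (i + 2)) :=
      (sub_le_sub_left hsum 1).trans <| one_sub_sum_le_prod_one_sub _
        (fun _ _ => pow_nonneg hx0 _) fun _ _ => pow_le_one₀ hx0 hx1.le
    calc 1 - x - x ^ 2 = (1 - x ^ 2 / (1 - x)) * (1 - x ^ 1) := by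
          field_simp [(sub_pos.2 hx1).ne']
      _ ≤ ∏ i ∈ range (n + 1), (1 - x ^ (i + 1)) := by
          rw [prod_range_succ']
          exact mul_le_mul_of_nonneg_right htail (by simpa using hx1.le)

end EulerFunction

theorem summable_tail_and_tsum_tail_le_of_le_pow_sq {f : ℕ → ℝ} {c x : ℝ}
    (hf0 : ∀ m, 0 ≤ f m) (hf : ∀ m, f m ≤ c * x ^ (m ^ 2)) (hx0 : 0 ≤ x) (hx : x ≤ 1 / 2)
    (r : ℕ) :
    Summable (fun k => f (r + k)) ∧ ∑' k, f (r + k) ≤ 2 * c * x ^ (r ^ 2) := by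
  have hc : 0 ≤ c := by simpa using (hf0 0).trans (hf 0)
  have hx1 : x < 1 := by linarith
  have hgeom : HasSum (fun k => c * x ^ (r ^ 2) * x ^ k) (c * x ^ (r ^ 2) * (1 - x)⁻¹) :=
    (hasSum_geometric_of_lt_one hx0 hx1).mul_left _
  have hle : ∀ k, f (r + k) ≤ c * x ^ (r ^ 2) * x ^ k := fun k => by
    have hexp : r ^ 2 + k ≤ (r + k) ^ 2 := by
      rw [add_sq]; linarith [Nat.le_self_pow two_ne_zero k, Nat.zero_le (2 * r * k)]
    calc f (r + k) ≤ c * x ^ ((r + k) ^ 2) := hf _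
      _ ≤ c * x ^ (r ^ 2 + k) := by gcongr c * ?_; exact pow_le_pow_of_le_one hx0 hx1.le hexp
      _ = c * x ^ (r ^ 2) * x ^ k := by ring
  have hsum : Summable (fun k => f (r + k)) :=
    hgeom.summable.of_nonneg_of_le (fun k => hf0 _) hle
  refine ⟨hsum, (hsum.tsum_le_tsum hle hgeom.summable).trans ?_⟩
  calc ∑' k, c * x ^ (r ^ 2) * x ^ k = c * x ^ (r ^ 2) * (1 - x)⁻¹ := hgeom.tsum_eq
    _ ≤ c * x ^ (r ^ 2) * 2 := by
        gcongr
        rw [inv_le_comm₀ (by linarith) two_pos]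
        linarith
    _ = 2 * c * x ^ (r ^ 2) := by ring

theorem CLrank_nonneg (p m : ℕ) : 0 ≤ CLrank p m :=
  div_nonneg
    (tprod_nonneg fun i => sub_nonneg.2 <| by simpa using Nat.cast_inv_le_one (p ^ (i + 1)))
    (by positivity)

theorem CLrank_eq_inv_pow_mul (p m : ℕ) :
    CLrank p m = (p : ℝ)⁻¹ ^ (m ^ 2) *
      ((∏' i : ℕ, (1 - (p : ℝ)⁻¹ ^ (i + 1))) / (∏ i ∈ range m, (1 - (p : ℝ)⁻¹ ^ (i + 1))) ^ 2) := by
  simp only [CLrank, one_div, inv_pow]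
  ring

theorem inv_natCast_le_half {p : ℕ} (hp : 2 ≤ p) : (p : ℝ)⁻¹ ≤ 1 / 2 := by
  rw [one_div]; gcongr; exact_mod_cast hp

theorem CLrank_le {p : ℕ} (hp : 2 ≤ p) (m : ℕ) : CLrank p m ≤ 4 * (p : ℝ)⁻¹ ^ (m ^ 2) := by
  have hx : (p : ℝ)⁻¹ ≤ 1 / 2 := inv_natCast_le_half hp
  set x := (p : ℝ)⁻¹
  have hx0 : 0 ≤ x := by positivity
  have hx1 : x < 1 := by linarith
  set Q := ∏ i ∈ range m, (1 - x ^ (i + 1))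
  set C := ∏' i : ℕ, (1 - x ^ (i + 1))
  have hQ : 1 / 4 ≤ Q :=
    le_trans (by nlinarith) (one_sub_sub_sq_le_prod_one_sub_pow_succ hx0 hx1 m)
  have hCQ : C ≤ Q := tprod_one_sub_pow_succ_le_prod hx0 hx1 _
  have hratio : C / Q ^ 2 ≤ 4 := by
    rw [div_le_iff₀ (by positivity)]
    nlinarith
  rw [CLrank_eq_inv_pow_mul, mul_comm 4]
  exact mul_le_mul_of_nonneg_left hratio (by positivity)

/-- The tail sum `∑_{k ≥ r} P(p, k)` converges and is at most `8·p^(-r²)`. -/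
theorem CLrank_tail_sum (p : ℕ) (hp : p.Prime) (r : ℕ) :
    Summable (fun k : ℕ => CLrank p (r + k)) ∧
      ∑' k : ℕ, CLrank p (r + k) ≤ 8 / (p : ℝ) ^ (r ^ 2) := by
  obtain ⟨hsum, hle⟩ := summable_tail_and_tsum_tail_le_of_le_pow_sq
    (CLrank_nonneg p) (CLrank_le hp.two_le) (by positivity) (inv_natCast_le_half hp.two_le) r
  refine ⟨hsum, hle.trans_eq ?_⟩
  rw [inv_pow]; ring
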